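/- With m = 2 resources, let A be the allocation produced by mechanism F2 on an instance with R_1 > 0 and R_2 > 0, and set ΔS_1 = Σ_{i∈G1} A_{i,1} − |G1|/n and ΔS_2 = Σ_{i∈G2} A_{i,2} − |G2|/n. Let A* be a feasible allocation satisfying SI and EF that maximizes social welfare among such allocations, with ΔS*_1 = Σ_{i∈G1} A*_{i,1} − |G1|/n and ΔS*_2 = Σ_{i∈G2} A*_{i,2} − |G2|/n. Then for each k ∈ {1, 2}, if resource k is fully allocated in A (Σ_i A_{i,k} = 1), then ΔS_k ≥ ΔS*_k. -/

import Mathlib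

open Finset
open scoped Classical

/-- A valid instance: all demands lie in `(0,1]` and every agent has a resource
with normalized demand `1` (its dominant resource). -/
def ValidInstance {n m : ℕ} (d : Fin n → Fin m → ℝ) : Prop :=
  (∀ i r, 0 < d i r ∧ d i r ≤ 1) ∧ ∀ i, ∃ r, d i r = 1

/-- Entrywise nonnegative allocation. -/
def NonnegAlloc {n m : ℕ} (A : Fin n → Fin m → ℝ) : Prop := ∀ i r, 0 ≤ A i r

/-- A feasible allocation: nonnegative and no resource over-allocated. -/
def Feasible {n m : ℕ} (A : Fin n → Fin m → ℝ) : Prop :=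
  NonnegAlloc A ∧ ∀ r, ∑ i, A i r ≤ 1

/-- Leontief utility of a bundle `Av` for demand vector `dv`:
the largest `y ≥ 0` with `y * dv r ≤ Av r` for all `r`. -/
noncomputable def util {m : ℕ} (dv Av : Fin m → ℝ) : ℝ :=
  sSup {y : ℝ | 0 ≤ y ∧ ∀ r, y * dv r ≤ Av r}

/-- Share incentive: every agent gets utility at least `1/n`. -/
def SI {n m : ℕ} (d A : Fin n → Fin m → ℝ) : Prop :=
  ∀ i, (1 : ℝ) / n ≤ util (d i) (A i)

/-- Envy-freeness: no agent prefers another agent's bundle. -/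
def EF {n m : ℕ} (d A : Fin n → Fin m → ℝ) : Prop :=
  ∀ i j, util (d i) (A j) ≤ util (d i) (A i)

/-- Social welfare: the sum of all utilities. -/
noncomputable def SW {n m : ℕ} (d A : Fin n → Fin m → ℝ) : ℝ :=
  ∑ i, util (d i) (A i)

/-- Utilization: the minimum over resources of the total allocated amount. -/
noncomputable def Util {n m : ℕ} (A : Fin n → Fin m → ℝ) : ℝ :=
  ⨅ r : Fin m, ∑ i, A i r

/-- Pareto optimality of an allocation. -/
def PO {n m : ℕ} (d A : Fin n → Fin m → ℝ) : Prop :=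
  ¬ ∃ A' : Fin n → Fin m → ℝ, Feasible A' ∧
      (∀ i, util (d i) (A i) ≤ util (d i) (A' i)) ∧
      ∃ i, util (d i) (A i) < util (d i) (A' i)

/-- Agents whose dominant resource is resource 1 (index `0`). -/
noncomputable def G1 {n m : ℕ} [NeZero m] (d : Fin n → Fin m → ℝ) : Finset (Fin n) :=
  Finset.univ.filter (fun i => d i 0 = 1)

/-- Agents whose demand for resource 1 (index `0`) is below `1`. -/
noncomputable def G2 {n m : ℕ} [NeZero m] (d : Fin n → Fin m → ℝ) : Finset (Fin n) :=
  Finset.univ.filter (fun i => d i 0 < 1)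

/-- Minority ratio `α = |G2| / n` for two resources. -/
def MinorityRatio {n : ℕ} (d : Fin n → Fin 2 → ℝ) (α : ℚ) : Prop :=
  ((G2 d).card : ℚ) = α * n

/-- The DRF allocation: every agent gets `x* • d i` with
`x* = 1 / max_r Σ_j d j r`. -/
noncomputable def DRF {n m : ℕ} (d : Fin n → Fin m → ℝ) : Fin n → Fin m → ℝ :=
  fun i r => (1 / ⨆ r' : Fin m, ∑ j, d j r') * d i r

/-- The F1 allocation at water level `t`: agents in `G1` get dominant share `1/n`;
an agent `i` with `d i 0 < 1` gets `max (d i 0 / n) t` of resource 1, i.e. has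
scale factor `max (1/n) (t / d i 0)`. -/
noncomputable def F1At {n m : ℕ} [NeZero m] (d : Fin n → Fin m → ℝ) (t : ℝ) :
    Fin n → Fin m → ℝ :=
  fun i r => (if d i 0 = 1 then (1 : ℝ) / n else max ((1 : ℝ) / n) (t / d i 0)) * d i r

/-- The F1 allocation: F1 at the largest feasible water level. -/
noncomputable def F1 {n m : ℕ} [NeZero m] (d : Fin n → Fin m → ℝ) : Fin n → Fin m → ℝ :=
  F1At d (sSup {t : ℝ | 0 ≤ t ∧ Feasible (F1At d t)})

/-- Residual amount of resource 1 after every agent receives `(1/n) • d i`. -/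
noncomputable def R1 {n : ℕ} (d : Fin n → Fin 2 → ℝ) : ℝ :=
  1 - ((G1 d).card : ℝ) / n - (∑ i ∈ G2 d, d i 0) / n

/-- Residual amount of resource 2 after every agent receives `(1/n) • d i`. -/
noncomputable def R2 {n : ℕ} (d : Fin n → Fin 2 → ℝ) : ℝ :=
  1 - ((G2 d).card : ℝ) / n - (∑ i ∈ G1 d, d i 1) / n

/-- Total increase over the equal split of the resource-1 shares of `G1`. -/
noncomputable def dS1 {n : ℕ} (d A : Fin n → Fin 2 → ℝ) : ℝ :=
  (∑ i ∈ G1 d, A i 0) - ((G1 d).card : ℝ) / n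

/-- Total increase over the equal split of the resource-2 shares of `G2`. -/
noncomputable def dS2 {n : ℕ} (d A : Fin n → Fin 2 → ℝ) : ℝ :=
  (∑ i ∈ G2 d, A i 1) - ((G2 d).card : ℝ) / n

/-- Water-filling structure of the F2-type allocations: within `G1` the
resource-2 shares are `max (d i 1 / n) t1`, within `G2` the resource-1 shares
are `max (d i 0 / n) t2`, and bundles are proportional to demands. -/
def Waterfill {n : ℕ} (d A : Fin n → Fin 2 → ℝ) (t1 t2 : ℝ) : Prop :=
  ∀ i, (d i 0 = 1 → A i 1 = max (d i 1 / n) t1 ∧ A i 0 = A i 1 / d i 1) ∧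
       (d i 0 < 1 → A i 0 = max (d i 0 / n) t2 ∧ A i 1 = A i 0 / d i 0)

/-- The output of an F2-type mechanism whose coupled rates follow the ratio
`ρ1 / ρ2`: a feasible water-filling allocation with
`dS1 / dS2 = ρ1 / ρ2` in which some resource is fully allocated. -/
def IsF2AllocWith {n : ℕ} (d A : Fin n → Fin 2 → ℝ) (ρ1 ρ2 : ℝ) : Prop :=
  ∃ t1 t2 : ℝ, 0 ≤ t1 ∧ 0 ≤ t2 ∧ Waterfill d A t1 t2 ∧
    dS1 d A * ρ2 = dS2 d A * ρ1 ∧ Feasible A ∧ ∃ r, ∑ i, A i r = 1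

/-- The output of mechanism F2 (rates coupled by `R1 / R2`). -/
def IsF2Alloc {n : ℕ} (d A : Fin n → Fin 2 → ℝ) : Prop :=
  IsF2AllocWith d A (R1 d) (R2 d)

/-- `R*_1 = R_1 + d_{i*,1}/n` where `i*` minimizes `d i 0` over `G2`. -/
noncomputable def R1s {n : ℕ} (d : Fin n → Fin 2 → ℝ) : ℝ :=
  R1 d + sInf ((fun i => d i 0) '' {i : Fin n | d i 0 < 1}) / n

/-- `R*_2 = R_2 + d_{j*,2}/n` where `j*` minimizes `d j 1` over `G1`. -/
noncomputable def R2s {n : ℕ} (d : Fin n → Fin 2 → ℝ) : ℝ :=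
  R2 d + sInf ((fun i => d i 1) '' {i : Fin n | d i 0 = 1}) / n

/-- The output of mechanism F2* (rates coupled by `R*_1 / R*_2`). -/
def IsF2sAlloc {n : ℕ} (d A : Fin n → Fin 2 → ℝ) : Prop :=
  IsF2AllocWith d A (R1s d) (R2s d)

/-!
Let `u` and `v` be the utilities in `A*` and in `A`. Feasibility keeps both water levels of `A`
at most `1/n`, so `A` is itself fair and `∑ v ≤ ∑ u`. Suppose resource `r` is exhausted in `A`,
and let `Q` be the agents that are water-filled on `r`; the others have `d_{kr} = 1`. Comparing
`∑ d_{kr} u_k ≤ 1 = ∑ d_{kr} v_k` with `∑ v ≤ ∑ u` gives `∑_Q (1 - d_{kr}) (u_k - v_k) ≥ 0`.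
Envy-freeness of `A*` makes `d_{kr} u_k` nondecreasing in `d_{kr}` on `Q`, so the agents of `Q`
that get less of `r` in `A*` than in `A` have the smallest `d_{kr}`, i.e. the largest weights
`1 / d_{kr} - 1`. A Chebyshev-type rearrangement then shows that `Q` uses at least as much of `r`
in `A*` as in `A`, which leaves no more of `r` for the agents outside `Q`.
-/

open Finset

section Utility

variable {m : ℕ} {dv Av : Fin m → ℝ}

theorem util_le_div (hdv : ∀ r, 0 < dv r) (hAv : ∀ r, 0 ≤ Av r) (r : Fin m) :
    util dv Av ≤ Av r / dv r :=
  csSup_le ⟨0, le_rfl, fun s => by simpa using hAv s⟩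
    fun _ hy => (le_div_iff₀ (hdv r)).2 (hy.2 r)

theorem util_mul_le (hdv : ∀ r, 0 < dv r) (hAv : ∀ r, 0 ≤ Av r) (r : Fin m) :
    util dv Av * dv r ≤ Av r :=
  (le_div_iff₀ (hdv r)).1 (util_le_div hdv hAv r)

theorem le_util [NeZero m] (hdv : ∀ r, 0 < dv r) {y : ℝ} (hy : 0 ≤ y)
    (h : ∀ r, y * dv r ≤ Av r) : y ≤ util dv Av :=
  le_csSup ⟨Av 0 / dv 0, fun _ hz => (le_div_iff₀ (hdv 0)).2 (hz.2 0)⟩ ⟨hy, h⟩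

theorem util_mul_self [NeZero m] (hdv : ∀ r, 0 < dv r) {c : ℝ} (hc : 0 ≤ c) :
    util dv (fun r => c * dv r) = c := by
  refine le_antisymm ?_ (le_util hdv hc fun _ => le_rfl)
  have hAv : ∀ r, 0 ≤ c * dv r := fun r => mul_nonneg hc (hdv r).le
  simpa [(hdv 0).ne'] using util_le_div hdv hAv 0

end Utility

theorem mul_util_le_of_envyFree {n m : ℕ} {d A : Fin n → Fin m → ℝ} (hd : ∀ k s, 0 < d k s)
    (hA : NonnegAlloc A) (hEF : EF d A) {r : Fin m} {j k : Fin n}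
    (hj : ∀ s ≠ r, d j s = 1) (hk : ∀ s ≠ r, d k s = 1) (hjk : d j r ≤ d k r) :
    d j r * util (d j) (A j) ≤ d k r * util (d k) (A k) := by
  have : NeZero m := NeZero.of_pos r.pos
  set u := util (d j) (A j)
  have hu : 0 ≤ u := le_util (hd j) le_rfl fun s => by simpa using hA j s
  have hscaled : u * d j r / d k r ≤ util (d k) (A j) := by
    refine le_util (hd k) (by have := hd j r; have := hd k r; positivity) fun s => ?_
    rcases eq_or_ne s r with rfl | hs
    · rw [div_mul_cancel₀ _ (hd k s).ne']
      exact util_mul_le (hd j) (hA j) s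
    · calc u * d j r / d k r * d k s ≤ u * d j s := by
            rw [hk s hs, hj s hs, mul_one, mul_one, div_le_iff₀ (hd k r)]
            exact mul_le_mul_of_nonneg_left hjk hu
        _ ≤ A j s := util_mul_le (hd j) (hA j) s
  have := hscaled.trans (hEF k j)
  rw [div_le_iff₀ (hd k r)] at this
  linarith

theorem sum_mul_neg_of_sum_neg {ι : Type*} {s : Finset ι} {e w : ι → ℝ}
    (he : ∑ i ∈ s, e i < 0) (hw : ∀ i ∈ s, e i < 0 → 0 < w i)
    (hsep : ∀ i ∈ s, ∀ j ∈ s, e i < 0 → 0 ≤ e j → w j ≤ w i) :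
    ∑ i ∈ s, w i * e i < 0 := by
  have hneg : (s.filter fun i => e i < 0).Nonempty := by
    by_contra h
    rw [not_nonempty_iff_eq_empty, filter_eq_empty_iff] at h
    exact (sum_nonneg fun i hi => not_lt.1 (h hi)).not_gt he
  obtain ⟨i₀, hi₀, hmin⟩ := exists_min_image _ w hneg
  rw [mem_filter] at hi₀
  calc ∑ i ∈ s, w i * e i ≤ ∑ i ∈ s, w i₀ * e i := sum_le_sum fun i hi => by
        rcases lt_or_ge (e i) 0 with h | h
        · exact mul_le_mul_of_nonpos_right (hmin i (mem_filter.2 ⟨hi, h⟩)) h.le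
        · exact mul_le_mul_of_nonneg_right (hsep i₀ hi₀.1 i hi hi₀.2 h) h
    _ = w i₀ * ∑ i ∈ s, e i := (mul_sum _ _ _).symm
    _ < 0 := mul_neg_of_pos_of_neg (hw i₀ hi₀.1 hi₀.2) he

theorem sum_mul_le_of_waterfill {ι : Type*} {Q : Finset ι} {b u v : ι → ℝ} {c t : ℝ}
    (hc : 0 ≤ c) (ht : t ≤ c) (hb : ∀ j ∈ Q, 0 < b j)
    (hv : ∀ j ∈ Q, b j * v j = max (b j * c) t) (hu : ∀ j ∈ Q, c ≤ u j)
    (hmono : ∀ j ∈ Q, ∀ k ∈ Q, b j ≤ b k → b j * u j ≤ b k * u k)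
    (hbal : 0 ≤ ∑ j ∈ Q, (1 - b j) * (u j - v j)) :
    ∑ j ∈ Q, b j * v j ≤ ∑ j ∈ Q, b j * u j := by
  by_contra! hlt
  have hneg : ∑ j ∈ Q, (1 - b j) / b j * (b j * u j - b j * v j) < 0 := by
    refine sum_mul_neg_of_sum_neg (by rw [sum_sub_distrib]; linarith) ?_ ?_
    · intro j hj hej
      have hb1 : b j < 1 := by
        by_contra! hb1
        rw [hv j hj, max_eq_left (ht.trans (le_mul_of_one_le_left hc hb1))] at hej
        linarith [mul_le_mul_of_nonneg_left (hu j hj) (hb j hj).le]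
      exact div_pos (by linarith) (hb j hj)
    · intro i hi j hj hei hej
      rw [hv i hi] at hei
      rw [hv j hj] at hej
      have hij : b i ≤ b j := by
        by_contra! hji
        have hit : b i * u i < t := (lt_max_iff.1 (by linarith)).resolve_left
          (not_lt.2 (mul_le_mul_of_nonneg_left (hu i hi) (hb i hi).le))
        have hjc : b j * c ≤ b j * u j := mul_le_mul_of_nonneg_left (hu j hj) (hb j hj).le
        rw [max_eq_right (by linarith [hmono j hj i hi hji.le])] at hej
        linarith [hmono j hj i hi hji.le]
      rw [sub_div, sub_div, div_self (hb i hi).ne', div_self (hb j hj).ne']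
      exact sub_le_sub_right (div_le_div_of_nonneg_left zero_le_one (hb i hi) hij) 1
  have hsame : ∑ j ∈ Q, (1 - b j) / b j * (b j * u j - b j * v j)
      = ∑ j ∈ Q, (1 - b j) * (u j - v j) :=
    sum_congr rfl fun j hj => by field_simp [(hb j hj).ne']
  linarith

theorem sum_one_sub_mul_nonneg {ι : Type*} [Fintype ι] {Q : Finset ι} {b u v : ι → ℝ}
    (hQc : ∀ k ∉ Q, b k = 1) (hsum : ∑ k, v k ≤ ∑ k, u k)
    (hwsum : ∑ k, b k * u k ≤ ∑ k, b k * v k) :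
    0 ≤ ∑ j ∈ Q, (1 - b j) * (u j - v j) := by
  rw [sum_subset (subset_univ Q) fun k _ hk => by rw [hQc k hk, sub_self, zero_mul]]
  have hsplit : ∑ k, (1 - b k) * (u k - v k)
      = (∑ k, u k - ∑ k, v k) - (∑ k, b k * u k - ∑ k, b k * v k) := by
    simp only [← sum_sub_distrib]
    exact sum_congr rfl fun k _ => by ring
  linarith

theorem sum_compl_le_of_exhausted {n m : ℕ} {d A A' : Fin n → Fin m → ℝ}
    (hd : ∀ k s, 0 < d k s) {r : Fin m} {Q : Finset (Fin n)}
    (hQc : ∀ k ∉ Q, d k r = 1) (hQ : ∀ j ∈ Q, ∀ s ≠ r, d j s = 1)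
    {v : Fin n → ℝ} {t : ℝ} (ht : t ≤ 1 / n) (hA : ∀ k s, A k s = v k * d k s)
    (hAQ : ∀ j ∈ Q, A j r = max (d j r / n) t) (hAr : ∑ k, A k r = 1)
    (hA' : Feasible A') (hSI : SI d A') (hEF : EF d A') (hSW : ∑ k, v k ≤ SW d A') :
    ∑ k ∈ Qᶜ, A' k r ≤ ∑ k ∈ Qᶜ, A k r := by
  set u := fun k => util (d k) (A' k)
  have huse : ∀ k, d k r * u k ≤ A' k r := fun k =>
    (mul_comm _ _).trans_le (util_mul_le (hd k) (hA'.1 k) r)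
  have hAv : ∀ k, A k r = d k r * v k := fun k => (hA k r).trans (mul_comm _ _)
  have hbal : 0 ≤ ∑ j ∈ Q, (1 - d j r) * (u j - v j) := by
    refine sum_one_sub_mul_nonneg hQc hSW ?_
    calc ∑ k, d k r * u k ≤ ∑ k, A' k r := sum_le_sum fun k _ => huse k
      _ ≤ ∑ k, A k r := (hA'.2 r).trans hAr.ge
      _ = ∑ k, d k r * v k := sum_congr rfl fun k _ => hAv k
  have hQuse := sum_mul_le_of_waterfill (one_div_nonneg.2 n.cast_nonneg) ht
    (fun j _ => hd j r) (fun j hj => by rw [← hAv, hAQ j hj, mul_one_div]) (fun j _ => hSI j)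
    (fun j hj k hk => mul_util_le_of_envyFree hd hA'.1 hEF (hQ j hj) (hQ k hk)) hbal
  have hA'Q : ∑ j ∈ Q, d j r * u j ≤ ∑ j ∈ Q, A' j r := sum_le_sum fun k _ => huse k
  have hAQ' : ∑ j ∈ Q, d j r * v j = ∑ j ∈ Q, A j r := sum_congr rfl fun k _ => (hAv k).symm
  have e' := sum_add_sum_compl Q (fun k => A' k r)
  have e := sum_add_sum_compl Q (fun k => A k r)
  linarith [hA'.2 r]

theorem le_inv_of_sum_le_one {n : ℕ} {f : Fin n → ℝ} {t : ℝ} (hsum : ∑ k, f k ≤ 1)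
    (hf : ∀ k, min (1 / n : ℝ) t ≤ f k) {j : Fin n} (hj : t ≤ f j) : t ≤ 1 / n := by
  by_contra! h
  have hlt : ∑ _k : Fin n, (1 / n : ℝ) < ∑ k, f k :=
    sum_lt_sum (fun k _ => (min_eq_left h.le).symm.trans_le (hf k))
      ⟨j, mem_univ j, h.trans_le hj⟩
  rw [sum_const, card_univ, Fintype.card_fin, nsmul_eq_mul,
    mul_one_div_cancel (Nat.cast_ne_zero.2 j.pos.ne')] at hlt
  linarith

theorem waterfill_no_envy {a b c t x : ℝ} (ha : 0 < a) (hb : 0 < b) (hc : 0 ≤ c) (ht : 0 ≤ t)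
    (hx : x ≤ max c (t / b)) (hx' : x ≤ max c (t / b) * b / a) : x ≤ max c (t / a) := by
  rcases le_total a b with hab | hba
  · exact hx.trans (max_le_max le_rfl (div_le_div_of_nonneg_left ht ha hab))
  · refine hx'.trans ((div_le_iff₀ ha).2 ?_)
    rw [max_mul_of_nonneg _ _ hb.le, max_mul_of_nonneg _ _ ha.le, div_mul_cancel₀ _ hb.ne',
      div_mul_cancel₀ _ ha.ne']
    exact max_le_max (mul_le_mul_of_nonneg_left hba hc) le_rfl

section TwoResources

variable {n : ℕ} {d A : Fin n → Fin 2 → ℝ} {t1 t2 : ℝ} {k : Fin n}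

theorem mem_G1 : k ∈ G1 d ↔ d k 0 = 1 := by simp [G1]

theorem mem_G2 : k ∈ G2 d ↔ d k 0 < 1 := by simp [G2]

theorem ValidInstance.compl_G1 (hd : ValidInstance d) : (G1 d)ᶜ = G2 d := by
  ext k
  rw [mem_compl, mem_G1, mem_G2, ← Ne, ne_iff_lt_iff_le]
  exact (hd.1 k 0).2

theorem ValidInstance.compl_G2 (hd : ValidInstance d) : (G2 d)ᶜ = G1 d := by
  rw [← hd.compl_G1, compl_compl]

theorem ValidInstance.apply_one_of_mem_G2 (hd : ValidInstance d) (hk : k ∈ G2 d) :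
    d k 1 = 1 := by
  obtain ⟨r, hr⟩ := hd.2 k
  fin_cases r
  · exact absurd hr (mem_G2.1 hk).ne
  · exact hr

theorem Waterfill.apply_of_mem_G1 (hW : Waterfill d A t1 t2) (hd : ValidInstance d)
    (hk : k ∈ G1 d) (s : Fin 2) : A k s = max (1 / n : ℝ) (t1 / d k 1) * d k s := by
  obtain ⟨h1, h0⟩ := (hW k).1 (mem_G1.1 hk)
  have hpos := (hd.1 k 1).1
  have hA1 : A k 1 = max (1 / n : ℝ) (t1 / d k 1) * d k 1 := by
    rw [h1, max_mul_of_nonneg _ _ hpos.le, div_mul_cancel₀ _ hpos.ne', one_div_mul_eq_div]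
  fin_cases s
  · simp only [Fin.zero_eta, mem_G1.1 hk, mul_one, h0, hA1, mul_div_cancel_right₀ _ hpos.ne']
  · exact hA1

theorem Waterfill.apply_of_mem_G2 (hW : Waterfill d A t1 t2) (hd : ValidInstance d)
    (hk : k ∈ G2 d) (s : Fin 2) : A k s = max (1 / n : ℝ) (t2 / d k 0) * d k s := by
  obtain ⟨h0, h1⟩ := (hW k).2 (mem_G2.1 hk)
  have hpos := (hd.1 k 0).1
  have hA0 : A k 0 = max (1 / n : ℝ) (t2 / d k 0) * d k 0 := by
    rw [h0, max_mul_of_nonneg _ _ hpos.le, div_mul_cancel₀ _ hpos.ne', one_div_mul_eq_div]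
  fin_cases s
  · exact hA0
  · simp only [Fin.mk_one, hd.apply_one_of_mem_G2 hk, mul_one, h1, hA0,
      mul_div_cancel_right₀ _ hpos.ne']

theorem ValidInstance.mem_G1_or_mem_G2 (hd : ValidInstance d) (k : Fin n) :
    k ∈ G1 d ∨ k ∈ G2 d := by
  rw [← hd.compl_G1, mem_compl]
  exact em _

theorem Waterfill.util_of_mem_G1 (hW : Waterfill d A t1 t2) (hd : ValidInstance d)
    (hk : k ∈ G1 d) : util (d k) (A k) = max (1 / n : ℝ) (t1 / d k 1) := by
  rw [show A k = _ from funext (hW.apply_of_mem_G1 hd hk)]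
  exact util_mul_self (fun s => (hd.1 k s).1)
    ((one_div_nonneg.2 n.cast_nonneg).trans (le_max_left _ _))

theorem Waterfill.util_of_mem_G2 (hW : Waterfill d A t1 t2) (hd : ValidInstance d)
    (hk : k ∈ G2 d) : util (d k) (A k) = max (1 / n : ℝ) (t2 / d k 0) := by
  rw [show A k = _ from funext (hW.apply_of_mem_G2 hd hk)]
  exact util_mul_self (fun s => (hd.1 k s).1)
    ((one_div_nonneg.2 n.cast_nonneg).trans (le_max_left _ _))

theorem Waterfill.apply_eq_util_mul (hW : Waterfill d A t1 t2) (hd : ValidInstance d)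
    (k : Fin n) (s : Fin 2) : A k s = util (d k) (A k) * d k s := by
  rcases hd.mem_G1_or_mem_G2 k with hk | hk
  · rw [hW.util_of_mem_G1 hd hk, hW.apply_of_mem_G1 hd hk]
  · rw [hW.util_of_mem_G2 hd hk, hW.apply_of_mem_G2 hd hk]

theorem Waterfill.shareIncentive (hW : Waterfill d A t1 t2) (hd : ValidInstance d) :
    SI d A := fun k => by
  rcases hd.mem_G1_or_mem_G2 k with hk | hk
  · rw [hW.util_of_mem_G1 hd hk]
    exact le_max_left _ _
  · rw [hW.util_of_mem_G2 hd hk]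
    exact le_max_left _ _

theorem Waterfill.nonnegAlloc (hW : Waterfill d A t1 t2) (hd : ValidInstance d) :
    NonnegAlloc A := fun k s => by
  rw [hW.apply_eq_util_mul hd]
  exact mul_nonneg ((one_div_nonneg.2 n.cast_nonneg).trans (hW.shareIncentive hd k))
    (hd.1 k s).1.le

theorem Waterfill.level_le_of_mem_G1 (hW : Waterfill d A t1 t2) (hd : ValidInstance d)
    (hA : Feasible A) (hk : k ∈ G1 d) : t1 ≤ 1 / n := by
  have hshare : ∀ j ∈ G1 d, A j 1 = max (d j 1 / n) t1 := fun j hj => ((hW j).1 (mem_G1.1 hj)).1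
  refine le_inv_of_sum_le_one (hA.2 1) (fun j => ?_) ((hshare k hk).symm ▸ le_max_right _ _)
  rcases hd.mem_G1_or_mem_G2 j with hj | hj
  · exact (min_le_right _ _).trans ((hshare j hj).symm ▸ le_max_right _ _)
  · rw [hW.apply_of_mem_G2 hd hj, hd.apply_one_of_mem_G2 hj, mul_one]
    exact (min_le_left _ _).trans (le_max_left _ _)

theorem Waterfill.level_le_of_mem_G2 (hW : Waterfill d A t1 t2) (hd : ValidInstance d)
    (hA : Feasible A) (hk : k ∈ G2 d) : t2 ≤ 1 / n := by
  have hshare : ∀ j ∈ G2 d, A j 0 = max (d j 0 / n) t2 := fun j hj => ((hW j).2 (mem_G2.1 hj)).1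
  refine le_inv_of_sum_le_one (hA.2 0) (fun j => ?_) ((hshare k hk).symm ▸ le_max_right _ _)
  rcases hd.mem_G1_or_mem_G2 j with hj | hj
  · rw [hW.apply_of_mem_G1 hd hj, mem_G1.1 hj, mul_one]
    exact (min_le_left _ _).trans (le_max_left _ _)
  · exact (min_le_right _ _).trans ((hshare j hj).symm ▸ le_max_right _ _)

theorem Waterfill.envyFree (hW : Waterfill d A t1 t2) (hd : ValidInstance d)
    (ht1 : 0 ≤ t1) (ht2 : 0 ≤ t2) (ht1' : t1 ≤ 1 / n) (ht2' : t2 ≤ 1 / n) : EF d A := by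
  intro i k
  have hbound : ∀ s, util (d i) (A k) ≤ A k s / d i s :=
    util_le_div (fun s => (hd.1 i s).1) (hW.nonnegAlloc hd k)
  have hc : (0 : ℝ) ≤ 1 / n := one_div_nonneg.2 n.cast_nonneg
  rcases hd.mem_G1_or_mem_G2 i with hi | hi <;> rcases hd.mem_G1_or_mem_G2 k with hk | hk
  · rw [hW.util_of_mem_G1 hd hi]
    refine waterfill_no_envy (hd.1 i 1).1 (hd.1 k 1).1 hc ht1 ?_ ?_
    · simpa [hW.apply_of_mem_G1 hd hk, mem_G1.1 hi, mem_G1.1 hk] using hbound 0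
    · simpa [hW.apply_of_mem_G1 hd hk] using hbound 1
  · rw [hW.util_of_mem_G1 hd hi]
    calc util (d i) (A k) ≤ A k 0 / d i 0 := hbound 0
      _ = max (d k 0 / n) t2 := by rw [mem_G1.1 hi, div_one, ((hW k).2 (mem_G2.1 hk)).1]
      _ ≤ 1 / n := max_le (div_le_div_of_nonneg_right (hd.1 k 0).2 n.cast_nonneg) ht2'
      _ ≤ _ := le_max_left _ _
  · rw [hW.util_of_mem_G2 hd hi]
    calc util (d i) (A k) ≤ A k 1 / d i 1 := hbound 1
      _ = max (d k 1 / n) t1 := by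
        rw [hd.apply_one_of_mem_G2 hi, div_one, ((hW k).1 (mem_G1.1 hk)).1]
      _ ≤ 1 / n := max_le (div_le_div_of_nonneg_right (hd.1 k 1).2 n.cast_nonneg) ht1'
      _ ≤ _ := le_max_left _ _
  · rw [hW.util_of_mem_G2 hd hi]
    refine waterfill_no_envy (hd.1 i 0).1 (hd.1 k 0).1 hc ht2 ?_ ?_
    · simpa [hW.apply_of_mem_G2 hd hk, hd.apply_one_of_mem_G2 hi, hd.apply_one_of_mem_G2 hk]
        using hbound 1
    · simpa [hW.apply_of_mem_G2 hd hk] using hbound 0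

end TwoResources

theorem f2_exhausted_side_general (n : ℕ) (hn : 0 < n) (d : Fin n → Fin 2 → ℝ)
    (hd : ValidInstance d) (hG1 : n ≤ 2 * (G1 d).card) (hG2 : 1 ≤ (G2 d).card)
    (A : Fin n → Fin 2 → ℝ) (hA : IsF2Alloc d A)
    (Astar : Fin n → Fin 2 → ℝ)
    (hfeas : Feasible Astar) (hSI : SI d Astar) (hEF : EF d Astar)
    (hmax : ∀ B : Fin n → Fin 2 → ℝ, Feasible B → SI d B → EF d B →
      SW d B ≤ SW d Astar) :
    ((∑ i, A i 0) = 1 → dS1 d Astar ≤ dS1 d A) ∧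
    ((∑ i, A i 1) = 1 → dS2 d Astar ≤ dS2 d A) := by
  obtain ⟨t1, t2, ht1, ht2, hW, -, hAfeas, -⟩ := hA
  obtain ⟨i₁, hi₁⟩ : (G1 d).Nonempty := card_pos.1 (by omega)
  obtain ⟨i₂, hi₂⟩ : (G2 d).Nonempty := card_pos.1 (by omega)
  have ht1' := hW.level_le_of_mem_G1 hd hAfeas hi₁
  have ht2' := hW.level_le_of_mem_G2 hd hAfeas hi₂
  have hSW : SW d A ≤ SW d Astar :=
    hmax A hAfeas (hW.shareIncentive hd) (hW.envyFree hd ht1 ht2 ht1' ht2')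
  have hpos : ∀ k s, 0 < d k s := fun k s => (hd.1 k s).1
  constructor
  · intro hA0
    have h := sum_compl_le_of_exhausted hpos (r := 0)
      (fun k hk => mem_G1.1 (hd.compl_G2 ▸ mem_compl.2 hk))
      (fun j hj s hs => Fin.eq_one_of_ne_zero s hs ▸ hd.apply_one_of_mem_G2 hj) ht2'
      (hW.apply_eq_util_mul hd) (fun j hj => ((hW j).2 (mem_G2.1 hj)).1) hA0 hfeas hSI hEF hSW
    rw [hd.compl_G2] at h
    simpa [dS1] using h
  · intro hA1
    have h := sum_compl_le_of_exhausted hpos (r := 1)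
      (fun k hk => hd.apply_one_of_mem_G2 (hd.compl_G1 ▸ mem_compl.2 hk))
      (fun j hj s hs => (show s = 0 by omega) ▸ mem_G1.1 hj) ht1'
      (hW.apply_eq_util_mul hd) (fun j hj => ((hW j).1 (mem_G1.1 hj)).1) hA1 hfeas hSI hEF hSW
    rw [hd.compl_G1] at h
    simpa [dS2] using h

/-- For the F2 allocation `A` (with positive residuals) and a social-welfare
maximizing fair allocation `A*`: if resource `k` is fully allocated in `A`,
then `ΔS_k(A) ≥ ΔS*_k`. -/
theorem f2_exhausted_side (n : ℕ) (hn : 0 < n) (d : Fin n → Fin 2 → ℝ)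
    (hd : ValidInstance d) (hG1 : n ≤ 2 * (G1 d).card) (hG2 : 1 ≤ (G2 d).card)
    (hR1 : 0 < R1 d) (hR2 : 0 < R2 d)
    (A : Fin n → Fin 2 → ℝ) (hA : IsF2Alloc d A)
    (Astar : Fin n → Fin 2 → ℝ)
    (hfeas : Feasible Astar) (hSI : SI d Astar) (hEF : EF d Astar)
    (hmax : ∀ B : Fin n → Fin 2 → ℝ, Feasible B → SI d B → EF d B →
      SW d B ≤ SW d Astar) :
    ((∑ i, A i 0) = 1 → dS1 d Astar ≤ dS1 d A) ∧
    ((∑ i, A i 1) = 1 → dS2 d Astar ≤ dS2 d A) :=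
  f2_exhausted_side_general n hn d hd hG1 hG2 A hA Astar hfeas hSI hEF hmax
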